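/- Let X and Z be complex Banach spaces, T ∈ B(X), B ∈ B(Z), and assume qT = Bq for some injective q ∈ B(X,Z) whose range qX is closed in Z. Assume further that 0 ∈ σ(T), that T* is injective, and that B* has dense range in Z*. Let W denote the closure in Z* of B*(ker q*). Then the map B̃ : Z*/ker q* → Z*/W defined by B̃(z* + ker q*) = B*z* + W is a well-defined bounded linear operator whose range is dense in Z*/W but is not closed in Z*/W. -/

import Mathlib

/-!
Write `K = ker q*` and `W` for the closure of `B* K`. Dualizing `qT = Bq` gives `q* B* = T* q*`, so
`B* K ⊆ K` and, `K` being closed, `W ⊆ K`; hence `B*` induces a bounded map `Z*/K → Z*/W`, whose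
range is dense because that of `B*` is. If this range were closed it would be everything, so every
`z*` would be congruent to some `B* h` modulo `W ⊆ K`; applying `q*`, which is onto by Hahn–Banach
since `q` is an isomorphism onto its closed range, shows `T*` onto. A dual map that is onto makes
`T` bounded below (open mapping), and one that is injective makes the range of `T` dense, so `T`
would be invertible, contradicting `0 ∈ σ(T)`.
-/

open NormedSpace Filter Topology Set

noncomputable section

/-- The Banach-space adjoint (dual map) of a bounded operator:
`(dualOp q) g = g ∘ q`. -/
noncomputable def dualOp {E F : Type*} [NormedAddCommGroup E] [NormedSpace ℂ E]
    [NormedAddCommGroup F] [NormedSpace ℂ F] (q : E →L[ℂ] F) :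
    StrongDual ℂ F →L[ℂ] StrongDual ℂ E :=
  (ContinuousLinearMap.compL ℂ E F ℂ).flip q

namespace Submodule

variable {R M N : Type*} [Ring R] [AddCommGroup M] [Module R M] [TopologicalSpace M]
  [AddCommGroup N] [Module R N] [TopologicalSpace N]

def mapQL (p : Submodule R M) (p' : Submodule R N) (f : M →L[R] N)
    (h : p ≤ p'.comap (f : M →ₗ[R] N)) : M ⧸ p →L[R] N ⧸ p' where
  toLinearMap := p.mapQ p' f h
  cont := continuous_quot_lift _ (p'.mkQL.comp f).continuous

variable {p : Submodule R M} {p' : Submodule R N} {f : M →L[R] N}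
  {h : p ≤ p'.comap (f : M →ₗ[R] N)}

@[simp]
theorem mapQL_mk (x : M) :
    p.mapQL p' f h (Submodule.Quotient.mk x) = Submodule.Quotient.mk (f x) :=
  rfl

theorem denseRange_mapQL (hf : DenseRange f) : DenseRange (p.mapQL p' f h) :=
  DenseRange.of_comp (g := p.mkQ) (p'.mkQ_surjective.denseRange.comp hf p'.mkQL.continuous)

theorem exists_sub_mem_of_mapQL_surjective (hs : Function.Surjective (p.mapQL p' f h)) (y : N) :
    ∃ x, f x - y ∈ p' := by
  obtain ⟨u, hu⟩ := hs (Submodule.Quotient.mk y)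
  obtain ⟨x, rfl⟩ := p.mkQ_surjective u
  exact ⟨x, (Submodule.Quotient.eq p').mp hu⟩

end Submodule

section Dual

variable {X Y : Type*} [NormedAddCommGroup X] [NormedSpace ℂ X]
  [NormedAddCommGroup Y] [NormedSpace ℂ Y]

@[simp]
theorem dualOp_apply (q : X →L[ℂ] Y) (g : StrongDual ℂ Y) (x : X) : dualOp q g x = g (q x) := rfl

theorem dualOp_surjective_of_injective_of_isClosed_range [CompleteSpace X] [CompleteSpace Y]
    {q : X →L[ℂ] Y} (hinj : Function.Injective q) (hcl : IsClosed (range q)) :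
    Function.Surjective (dualOp q) := by
  intro f
  obtain ⟨g, hg, -⟩ :=
    exists_extension_norm_eq _ (f.comp (q.equivRange hinj hcl).symm.toContinuousLinearMap)
  refine ⟨g, ContinuousLinearMap.ext fun x => ?_⟩
  simpa [q.equivRange_symm_apply hinj hcl] using hg ⟨q x, mem_range_self x⟩

theorem denseRange_of_dualOp_injective {T : X →L[ℂ] Y} (hT : Function.Injective (dualOp T)) :
    T.range.topologicalClosure = ⊤ := by
  set S := T.range.topologicalClosure
  have : IsClosed (S : Set Y) := T.range.isClosed_topologicalClosure
  refine Submodule.eq_top_iff'.mpr fun y => by_contra fun hy => ?_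
  obtain ⟨φ, hφ⟩ := SeparatingDual.exists_ne_zero (R := ℂ)
    (mt (Submodule.Quotient.mk_eq_zero S).mp hy)
  have hφT : dualOp T (φ.comp S.mkQL) = dualOp T 0 := by
    ext x
    have hx : T x ∈ S := T.range.le_topologicalClosure ⟨x, rfl⟩
    simp [(Submodule.Quotient.mk_eq_zero S).mpr hx]
  exact hφ (by simpa using DFunLike.congr_fun (hT hφT) y)

theorem exists_antilipschitzWith_of_dualOp_surjective {T : X →L[ℂ] Y}
    (hT : Function.Surjective (dualOp T)) : ∃ c, AntilipschitzWith c T := by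
  obtain ⟨C, hC, hpre⟩ := ContinuousLinearMap.exists_preimage_norm_le (dualOp T) hT
  refine ⟨C.toNNReal, T.antilipschitz_of_bound fun x => ?_⟩
  rw [Real.coe_toNNReal C hC.le]
  refine norm_le_dual_bound ℂ x (by positivity) fun f => ?_
  obtain ⟨g, rfl, hg⟩ := hpre f
  calc ‖g (T x)‖ ≤ ‖g‖ * ‖T x‖ := g.le_opNorm _
    _ ≤ C * ‖dualOp T g‖ * ‖T x‖ := by gcongr
    _ = C * ‖T x‖ * ‖dualOp T g‖ := by ring

theorem isUnit_of_dualOp_bijective [CompleteSpace X] {T : X →L[ℂ] X}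
    (hT : Function.Bijective (dualOp T)) : IsUnit T :=
  ContinuousLinearMap.isUnit_iff_bijective.mpr <|
    (T.bijective_iff_dense_range_and_antilipschitz).mpr
      ⟨denseRange_of_dualOp_injective hT.1, exists_antilipschitzWith_of_dualOp_surjective hT.2⟩

end Dual

theorem induced_operator_dense_nonclosed_range {X Z : Type*}
    [NormedAddCommGroup X] [NormedSpace ℂ X] [CompleteSpace X]
    [NormedAddCommGroup Z] [NormedSpace ℂ Z] [CompleteSpace Z]
    (T : X →L[ℂ] X) (B : Z →L[ℂ] Z)
    (q : X →L[ℂ] Z) (hqinj : Function.Injective q)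
    (hqcl : IsClosed (Set.range q))
    (hq : ∀ x : X, q (T x) = B (q x))
    (hT0 : (0 : ℂ) ∈ spectrum ℂ T)
    (hTinj : Function.Injective (dualOp T))
    (hBdense : Dense (Set.range (dualOp B))) :
    ∃ Bt : (StrongDual ℂ Z ⧸ LinearMap.ker (dualOp q).toLinearMap) →L[ℂ]
        (StrongDual ℂ Z ⧸
          (Submodule.map (dualOp B).toLinearMap (LinearMap.ker (dualOp q).toLinearMap)).topologicalClosure),
      (∀ g : StrongDual ℂ Z, Bt (Submodule.Quotient.mk g) = Submodule.Quotient.mk (dualOp B g)) ∧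
      Dense (Set.range Bt) ∧ ¬ IsClosed (Set.range Bt) := by
  set K := LinearMap.ker (dualOp q).toLinearMap
  set W := (K.map (dualOp B).toLinearMap).topologicalClosure
  have hcomm : ∀ g, dualOp q (dualOp B g) = dualOp T (dualOp q g) := fun g => by
    ext x; simp [hq]
  have hKW : K ≤ W.comap (dualOp B).toLinearMap := fun g hg =>
    (K.map _).le_topologicalClosure ⟨g, hg, rfl⟩
  have hdense := Submodule.denseRange_mapQL (h := hKW) hBdense
  refine ⟨K.mapQL W (dualOp B) hKW, Submodule.mapQL_mk, hdense, fun hcl => ?_⟩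
  have hsurj : Function.Surjective (K.mapQL W (dualOp B) hKW) := by
    rw [← range_eq_univ, ← hcl.closure_eq, hdense.closure_range]
  have hWK : W ≤ K := by
    refine Submodule.topologicalClosure_minimal _ (Submodule.map_le_iff_le_comap.mpr fun g hg => ?_)
      (isClosed_singleton.preimage (dualOp q).continuous)
    change dualOp q (dualOp B g) = 0
    rw [hcomm, show dualOp q g = 0 from hg, map_zero]
  have hTsurj : Function.Surjective (dualOp T) := by
    refine Function.Surjective.of_comp (g := dualOp q) fun f => ?_
    obtain ⟨z, rfl⟩ := dualOp_surjective_of_injective_of_isClosed_range hqinj hqcl f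
    obtain ⟨g, hg⟩ := Submodule.exists_sub_mem_of_mapQL_surjective hsurj z
    refine ⟨g, ?_⟩
    simpa [K, ← hcomm, sub_eq_zero] using hWK hg
  exact (spectrum.zero_mem_iff ℂ).mp hT0 (isUnit_of_dualOp_bijective ⟨hTinj, hTsurj⟩)
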